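/- For integers 1 ≤ k ≤ n-1 and all t ≥ 0, the exponential polynomials E_{nk}(t) = A_{nk}(e^{-t}) satisfy the differential-difference relation d/dt [E_{n,k-1}(t) + E_{nk}(t)] = -(k-1) E_{n,k-1}(t) + k E_{nk}(t), where E_{n,k}(t) denotes A_{nk}(e^{-t}). -/

import Mathlib

open Real MeasureTheory

/-- A-kind orthogonal polynomials. -/
noncomputable def aKind (n k : ℕ) (x : ℝ) : ℝ :=
  ∑ j ∈ Finset.range (n - k + 1),
    (-1 : ℝ) ^ j * ((n - k).choose j : ℝ) * ((n + k + j).choose (n - k) : ℝ) * x ^ (k + j)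

/-- Orthogonal exponential polynomials `E_{nk}(t) = A_{nk}(e^{-t})`. -/
noncomputable def expA (n k : ℕ) (t : ℝ) : ℝ := aKind n k (Real.exp (-t))

/-!
Writing `x = e^{-t}`, the derivative `d/dt` acts on `x^m` as multiplication by `-m`. Comparing
coefficients, the relation `(d/dt + (k-1)) E_{n,k-1} = (k - d/dt) E_{nk}` becomes
`-(j+1) a_{n,k-1,j+1} = (2k+j) a_{n,k,j}` for the coefficient `a_{n,k,j}` of `x^{k+j}` in `A_{nk}`,
which follows from `(p+1) C(p, j) = (j+1) C(p+1, j+1)` and `(p+1) C(N, p+1) = (N-p) C(N, p)`.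
-/

open Finset

noncomputable def aKindCoeff (n k j : ℕ) : ℝ :=
  (-1 : ℝ) ^ j * ((n - k).choose j : ℝ) * ((n + k + j).choose (n - k) : ℝ)

lemma aKind_eq_sum (n k : ℕ) (x : ℝ) :
    aKind n k x = ∑ j ∈ range (n - k + 1), aKindCoeff n k j * x ^ (k + j) :=
  rfl

lemma Nat.succ_mul_choose_succ_mul_choose_succ (p j N : ℕ) :
    (j + 1) * (p + 1).choose (j + 1) * N.choose (p + 1) = (N - p) * p.choose j * N.choose p := by
  apply Nat.eq_of_mul_eq_mul_left p.succ_pos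
  calc (p + 1) * ((j + 1) * (p + 1).choose (j + 1) * N.choose (p + 1))
      = ((p + 1).choose (j + 1) * (j + 1)) * (N.choose (p + 1) * (p + 1)) := by ring
    _ = ((p + 1) * p.choose j) * (N.choose p * (N - p)) := by
      rw [← Nat.add_one_mul_choose_eq p j, Nat.choose_succ_right_eq N p]
    _ = (p + 1) * ((N - p) * p.choose j * N.choose p) := by ring

lemma succ_mul_aKindCoeff_succ {n m : ℕ} (hm : m < n) (j : ℕ) :
    ((j + 1 : ℕ) : ℝ) * aKindCoeff n m (j + 1) =
      -((2 * m + 2 + j : ℕ) : ℝ) * aKindCoeff n (m + 1) j := by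
  have hsub : n - m = n - (m + 1) + 1 := by omega
  have hN : n + m + (j + 1) = n + (m + 1) + j := by omega
  have hNp : n + (m + 1) + j - (n - (m + 1)) = 2 * m + 2 + j := by omega
  have hchoose := congrArg (Nat.cast (R := ℝ))
    (Nat.succ_mul_choose_succ_mul_choose_succ (n - (m + 1)) j (n + (m + 1) + j))
  rw [hNp] at hchoose
  simp only [aKindCoeff, hsub, hN, pow_succ]
  push_cast at hchoose ⊢
  linear_combination -(-1 : ℝ) ^ j * hchoose

lemma sum_mul_aKindCoeff_shift {n m : ℕ} (hm : m < n) (x : ℝ) :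
    ∑ j ∈ range (n - m + 1), (j : ℝ) * aKindCoeff n m j * x ^ (m + j) =
      -∑ j ∈ range (n - (m + 1) + 1),
        ((2 * m + 2 + j : ℕ) : ℝ) * aKindCoeff n (m + 1) j * x ^ (m + 1 + j) := by
  rw [show n - m + 1 = n - (m + 1) + 1 + 1 by omega, sum_range_succ', ← sum_neg_distrib]
  simp only [CharP.cast_eq_zero, zero_mul, add_zero]
  refine sum_congr rfl fun j _ => ?_
  have hcoeff := succ_mul_aKindCoeff_succ hm j
  push_cast at hcoeff ⊢
  rw [hcoeff, show m + (j + 1) = m + 1 + j by omega]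
  ring

/-- `x * A_{nk}'(x)`. -/
noncomputable def aKindEuler (n k : ℕ) (x : ℝ) : ℝ :=
  ∑ j ∈ range (n - k + 1), ((k + j : ℕ) : ℝ) * aKindCoeff n k j * x ^ (k + j)

lemma aKindEuler_add_aKindEuler_succ {n m : ℕ} (hm : m < n) (x : ℝ) :
    aKindEuler n m x + aKindEuler n (m + 1) x = m * aKind n m x - (m + 1) * aKind n (m + 1) x := by
  have hshift := sum_mul_aKindCoeff_shift hm x
  have hm' : aKindEuler n m x - m * aKind n m x =
      ∑ j ∈ range (n - m + 1), (j : ℝ) * aKindCoeff n m j * x ^ (m + j) := by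
    rw [aKindEuler, aKind_eq_sum, mul_sum, ← sum_sub_distrib]
    refine sum_congr rfl fun j _ => ?_
    push_cast
    ring
  have hm1 : aKindEuler n (m + 1) x + (m + 1) * aKind n (m + 1) x = ∑ j ∈ range (n - (m + 1) + 1),
      ((2 * m + 2 + j : ℕ) : ℝ) * aKindCoeff n (m + 1) j * x ^ (m + 1 + j) := by
    rw [aKindEuler, aKind_eq_sum, mul_sum, ← sum_add_distrib]
    refine sum_congr rfl fun j _ => ?_
    push_cast
    ring
  linarith

lemma hasDerivAt_exp_neg_pow (m : ℕ) (t : ℝ) :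
    HasDerivAt (fun s => exp (-s) ^ m) (-m * exp (-t) ^ m) t := by
  simp_rw [← Real.exp_nat_mul]
  convert ((hasDerivAt_neg t).const_mul (m : ℝ)).exp using 1
  ring

lemma hasDerivAt_expA (n k : ℕ) (t : ℝ) :
    HasDerivAt (expA n k) (-aKindEuler n k (exp (-t))) t := by
  have h := HasDerivAt.fun_sum fun j (_ : j ∈ range (n - k + 1)) =>
    (hasDerivAt_exp_neg_pow (k + j) t).const_mul (aKindCoeff n k j)
  rw [aKindEuler, ← sum_neg_distrib, show expA n k = _ from funext fun s => aKind_eq_sum n k (exp (-s))]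
  exact h.congr_deriv (sum_congr rfl fun j _ => by ring)

theorem stmt_18_general (n k : ℕ) (hk1 : 1 ≤ k) (hk2 : k ≤ n - 1)
    (t : ℝ) :
    deriv (fun s => expA n (k - 1) s + expA n k s) t =
      -((k : ℝ) - 1) * expA n (k - 1) t + (k : ℝ) * expA n k t := by
  obtain ⟨m, rfl⟩ : ∃ m, k = m + 1 := ⟨k - 1, by omega⟩
  rw [Nat.add_sub_cancel, ((hasDerivAt_expA n m t).fun_add (hasDerivAt_expA n (m + 1) t)).deriv]
  have h := aKindEuler_add_aKindEuler_succ (by omega : m < n) (exp (-t))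
  simp only [expA]
  push_cast at h ⊢
  linarith

theorem stmt_18 (n k : ℕ) (hk1 : 1 ≤ k) (hk2 : k ≤ n - 1)
    (t : ℝ) (ht : 0 ≤ t) :
    deriv (fun s => expA n (k - 1) s + expA n k s) t =
      -((k : ℝ) - 1) * expA n (k - 1) t + (k : ℝ) * expA n k t :=
  stmt_18_general n k hk1 hk2 t
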